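/- Let Ω ⊂ ℝ³ be a bounded Lipschitz domain, D ⋐ Ω, and let n ∈ L^∞(Ω \ D̄) with 0 < n₋ ≤ n(x) ≤ n⁺ < 1 a.e. Set γ = 1/(1 − n₋). Then for any E ∈ W (i.e. E ∈ H₀(curl, Ω) with curl curl E ∈ L²(Ω \ D̄)³) and any ω > 0, the quantity A_ω(E,E) := ∫_{Ω\D̄} (1−n)⁻¹ |curl curl E − ω²E|² dx + ω² ‖curl E‖²_{L²(Ω)} + ω⁴ ‖E‖²_{L²(Ω)} satisfies A_ω(E,E) ≥ C (‖curl curl E‖²_{L²(Ω\D̄)} + ω⁴‖E‖²_{L²(Ω)} + ω²‖curl E‖²_{L²(Ω)}) for some constant C > 0 depending only on γ. -/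
import Mathlib


open MeasureTheory

noncomputable section

/-- Partial derivative of a complex scalar field on `ℝ³` in direction `j`. -/
def pdC (f : (Fin 3 → ℝ) → ℂ) (j : Fin 3) (x : Fin 3 → ℝ) : ℂ :=
  fderiv ℝ f x (Pi.single j 1)

/-- Curl of a complex vector field on `ℝ³`. -/
def curlC (E : (Fin 3 → ℝ) → Fin 3 → ℂ) (x : Fin 3 → ℝ) : Fin 3 → ℂ :=
  fun i => pdC (fun y => E y (i + 2)) (i + 1) x - pdC (fun y => E y (i + 1)) (i + 2) x

/-- Pointwise inequality: `|a|² ≤ 3|a−b|² + (3/2)|b|²`. -/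
lemma normSq_le_aux (a b : ℂ) :
    Complex.normSq a ≤ 3 * Complex.normSq (a - b) + (3 / 2) * Complex.normSq b := by
  simp only [Complex.normSq_apply, Complex.sub_re, Complex.sub_im]
  nlinarith [sq_nonneg (2 * (a.re - b.re) - b.re), sq_nonneg (2 * (a.im - b.im) - b.im)]

/-- Coercivity of the sesquilinear form `A_ω` of the interior transmission eigenvalue
problem when `0 < n₋ ≤ n ≤ n⁺ < 1` on `Ω \ D̄`: with `γ = 1/(1 − n₋)` there is a
constant `C > 0` depending only on `γ` such that
`A_ω(E,E) ≥ C(‖curl curl E‖²_{L²(Ω\D̄)} + ω⁴‖E‖²_{L²(Ω)} + ω²‖curl E‖²_{L²(Ω)})`. -/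
theorem A_omega_coercive (Ω D : Set (Fin 3 → ℝ)) (hΩo : IsOpen Ω)
    (hΩb : Bornology.IsBounded Ω) (hD : closure D ⊆ Ω)
    (n : (Fin 3 → ℝ) → ℝ) (nminus nplus : ℝ) (h0 : 0 < nminus) (h1 : nplus < 1)
    (hn : ∀ x ∈ Ω \ closure D, nminus ≤ n x ∧ n x ≤ nplus) :
    ∃ C > 0, ∀ ω : ℝ, 0 < ω → ∀ E : (Fin 3 → ℝ) → Fin 3 → ℂ,
      (∀ x ∈ closure Ω, ContDiffAt ℝ 2 E x) →
      IntegrableOn (fun x => ∑ i, Complex.normSq (curlC (curlC E) x i)) (Ω \ closure D) →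
      IntegrableOn (fun x => (1 - n x)⁻¹ *
        ∑ i, Complex.normSq (curlC (curlC E) x i - ((ω ^ 2 : ℝ) : ℂ) * E x i)) (Ω \ closure D) →
      IntegrableOn (fun x => ∑ i, Complex.normSq (curlC E x i)) Ω →
      IntegrableOn (fun x => ∑ i, Complex.normSq (E x i)) Ω →
      C * ((∫ x in Ω \ closure D, ∑ i, Complex.normSq (curlC (curlC E) x i))
            + ω ^ 4 * (∫ x in Ω, ∑ i, Complex.normSq (E x i))
            + ω ^ 2 * (∫ x in Ω, ∑ i, Complex.normSq (curlC E x i)))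
        ≤ (∫ x in Ω \ closure D, (1 - n x)⁻¹ *
              ∑ i, Complex.normSq (curlC (curlC E) x i - ((ω ^ 2 : ℝ) : ℂ) * E x i))
          + ω ^ 2 * (∫ x in Ω, ∑ i, Complex.normSq (curlC E x i))
          + ω ^ 4 * (∫ x in Ω, ∑ i, Complex.normSq (E x i)) := by
  refine ⟨1 / 3, by norm_num, ?_⟩
  intro ω hω E hreg hI1 hI2 hI3 hI4
  set T : Set (Fin 3 → ℝ) := Ω \ closure D with hT
  have hTmeas : MeasurableSet T := hΩo.measurableSet.diff isClosed_closure.measurableSet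
  set f : (Fin 3 → ℝ) → ℝ := fun x => ∑ i, Complex.normSq (curlC (curlC E) x i) with hf
  set e : (Fin 3 → ℝ) → ℝ := fun x => ∑ i, Complex.normSq (E x i) with he
  set c : (Fin 3 → ℝ) → ℝ := fun x => ∑ i, Complex.normSq (curlC E x i) with hc
  set g : (Fin 3 → ℝ) → ℝ := fun x => (1 - n x)⁻¹ *
      ∑ i, Complex.normSq (curlC (curlC E) x i - ((ω ^ 2 : ℝ) : ℂ) * E x i) with hg
  -- e is integrable on T and its integral on T is ≤ the one on Ω
  have hIe' : IntegrableOn e T := hI4.mono_set Set.diff_subset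
  have hIEle : (∫ x in T, e x) ≤ ∫ x in Ω, e x := by
    refine setIntegral_mono_set hI4 ?_ (Filter.Eventually.of_forall Set.diff_subset)
    exact Filter.Eventually.of_forall fun x => Finset.sum_nonneg fun i _ => Complex.normSq_nonneg _
  -- pointwise estimate on T
  have hpt : ∀ x ∈ T, (1 / 3) * f x - (ω ^ 4 / 2) * e x ≤ g x := by
    intro x hx
    obtain ⟨hnl, hnu⟩ := hn x hx
    have hpos : 0 < 1 - n x := by linarith
    have hle1 : 1 - n x ≤ 1 := by linarith
    have hinv : 1 ≤ (1 - n x)⁻¹ := (one_le_inv₀ hpos).mpr hle1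
    have hSnn : 0 ≤ ∑ i, Complex.normSq (curlC (curlC E) x i - ((ω ^ 2 : ℝ) : ℂ) * E x i) :=
      Finset.sum_nonneg fun i _ => Complex.normSq_nonneg _
    have hgge : (∑ i, Complex.normSq (curlC (curlC E) x i - ((ω ^ 2 : ℝ) : ℂ) * E x i)) ≤ g x := by
      simpa [hg] using mul_le_mul_of_nonneg_right hinv hSnn
    have hsum : f x ≤ 3 * (∑ i, Complex.normSq (curlC (curlC E) x i - ((ω ^ 2 : ℝ) : ℂ) * E x i))
        + (3 / 2) * (ω ^ 4 * e x) := by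
      have hcomp : ∀ i : Fin 3, Complex.normSq (curlC (curlC E) x i) ≤
          3 * Complex.normSq (curlC (curlC E) x i - ((ω ^ 2 : ℝ) : ℂ) * E x i)
          + (3 / 2) * (ω ^ 4 * Complex.normSq (E x i)) := by
        intro i
        have := normSq_le_aux (curlC (curlC E) x i) (((ω ^ 2 : ℝ) : ℂ) * E x i)
        have hb : Complex.normSq (((ω ^ 2 : ℝ) : ℂ) * E x i) = ω ^ 4 * Complex.normSq (E x i) := by
          rw [Complex.normSq_mul, Complex.normSq_ofReal]; ring
        rw [hb] at this; linarith
      calc f x ≤ ∑ i, (3 * Complex.normSq (curlC (curlC E) x i - ((ω ^ 2 : ℝ) : ℂ) * E x i)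
          + (3 / 2) * (ω ^ 4 * Complex.normSq (E x i))) :=
            Finset.sum_le_sum fun i _ => hcomp i
        _ = 3 * (∑ i, Complex.normSq (curlC (curlC E) x i - ((ω ^ 2 : ℝ) : ℂ) * E x i))
            + (3 / 2) * (ω ^ 4 * e x) := by
          rw [Finset.sum_add_distrib, ← Finset.mul_sum, ← Finset.mul_sum, ← Finset.mul_sum]
    linarith
  -- integrate the pointwise estimate
  have hkey : (∫ x in T, ((1 / 3) * f x - (ω ^ 4 / 2) * e x)) ≤ ∫ x in T, g x := by
    refine setIntegral_mono_on ?_ hI2 hTmeas hpt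
    exact (hI1.const_mul _).sub (hIe'.const_mul _)
  have hsplit : (∫ x in T, ((1 / 3) * f x - (ω ^ 4 / 2) * e x))
      = (1 / 3) * (∫ x in T, f x) - (ω ^ 4 / 2) * (∫ x in T, e x) := by
    rw [integral_sub (hI1.const_mul _) (hIe'.const_mul _), integral_const_mul, integral_const_mul]
  rw [hsplit] at hkey
  -- nonnegativity of the integrals
  have hEnn : 0 ≤ ∫ x in Ω, e x :=
    integral_nonneg fun x => Finset.sum_nonneg fun i _ => Complex.normSq_nonneg _
  have hcnn : 0 ≤ ∫ x in Ω, c x :=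
    integral_nonneg fun x => Finset.sum_nonneg fun i _ => Complex.normSq_nonneg _
  have hω4 : (0 : ℝ) ≤ ω ^ 4 := by positivity
  have hω2 : (0 : ℝ) ≤ ω ^ 2 := by positivity
  have h1' : ω ^ 4 * (∫ x in T, e x) ≤ ω ^ 4 * (∫ x in Ω, e x) :=
    mul_le_mul_of_nonneg_left hIEle hω4
  have h2' : 0 ≤ ω ^ 4 * (∫ x in Ω, e x) := mul_nonneg hω4 hEnn
  have h3' : 0 ≤ ω ^ 2 * (∫ x in Ω, c x) := mul_nonneg hω2 hcnn
  show (1 / 3) * ((∫ x in T, f x) + ω ^ 4 * (∫ x in Ω, e x) + ω ^ 2 * (∫ x in Ω, c x))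
      ≤ (∫ x in T, g x) + ω ^ 2 * (∫ x in Ω, c x) + ω ^ 4 * (∫ x in Ω, e x)
  linarith

end
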